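/- arXiv:1604.01340 — 2 statements merged into one kernel-verified Lean document; each statement's English description precedes it below -/
import Mathlib

section
/- The limit R(τ) = lim_{m→∞} 5^m Φ₋^{∘m}(τ) exists for all τ ∈ [0, 5/2], where Φ₋(t) = (5 − √(25 − 4t))/2 and Φ₋^{∘m} is m-fold composition. Moreover R(0) = 0. -/
open Filter

/-- The inverse branch of spectral decimation. -/
noncomputable def PhiMinus (t : ℝ) : ℝ := (5 - Real.sqrt (25 - 4 * t)) / 2

lemma phi_facts {t : ℝ} (ht0 : 0 < t) (ht1 : t ≤ 5/2) :
    0 < PhiMinus t ∧ PhiMinus t ≤ 5/2 ∧ t/5 ≤ PhiMinus t ∧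
      PhiMinus t * (10 - t) ≤ 2 * t := by
  have hnn : (0:ℝ) ≤ 25 - 4 * t := by linarith
  have hs0 : 0 ≤ Real.sqrt (25 - 4 * t) := Real.sqrt_nonneg _
  have hs2 : Real.sqrt (25 - 4 * t) ^ 2 = 25 - 4 * t := Real.sq_sqrt hnn
  set s := Real.sqrt (25 - 4 * t) with hs
  have hsl : 5 - t ≤ s := by
    nlinarith [sq_nonneg (s - (5 - t)), sq_nonneg (s + (5 - t))]
  have hs5 : s < 5 := by nlinarith
  unfold PhiMinus
  rw [← hs]
  refine ⟨by nlinarith, by nlinarith, by nlinarith, by nlinarith⟩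

/-- The limit `R(τ) = lim_m 5^m Φ₋^{∘m}(τ)` exists for every `τ ∈ [0, 5/2]`, and
`R(0) = 0`. -/
theorem stmt_11 :
    (∀ τ ∈ Set.Icc (0 : ℝ) (5 / 2),
      ∃ L : ℝ, Tendsto (fun m : ℕ => (5 : ℝ) ^ m * PhiMinus^[m] τ) atTop (nhds L)) ∧
      Tendsto (fun m : ℕ => (5 : ℝ) ^ m * PhiMinus^[m] 0) atTop (nhds 0) := by
  have h0 : PhiMinus 0 = 0 := by
    unfold PhiMinus
    rw [show (25 - 4 * (0:ℝ)) = 5 ^ 2 by norm_num, Real.sqrt_sq (by norm_num : (0:ℝ) ≤ 5)]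
    norm_num
  have hiter0 : ∀ m : ℕ, PhiMinus^[m] (0:ℝ) = 0 := fun m => Function.iterate_fixed h0 m
  have h2 : Tendsto (fun m : ℕ => (5:ℝ)^m * PhiMinus^[m] 0) atTop (nhds 0) := by
    have he : (fun m : ℕ => (5:ℝ)^m * PhiMinus^[m] 0) = fun _ => (0:ℝ) := by
      funext m; rw [hiter0]; ring
    rw [he]; exact tendsto_const_nhds
  refine ⟨fun τ hτ => ?_, h2⟩
  rcases eq_or_lt_of_le hτ.1 with h | h
  · exact ⟨0, by rw [← h]; exact h2⟩
  -- now 0 < τ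
  set b : ℕ → ℝ := fun m => PhiMinus^[m] τ with hb
  have hbs : ∀ m, b (m+1) = PhiMinus (b m) := by
    intro m; simp only [hb, Function.iterate_succ_apply']
  have hinv : ∀ m, 0 < b m ∧ b m ≤ 5/2 ∧
      (5:ℝ)^m * b m * (8 - τ) + τ * b m ≤ 8 * τ := by
    intro m
    induction m with
    | zero =>
      refine ⟨by simpa [hb] using h, by simpa [hb] using hτ.2, ?_⟩
      simp only [hb, Function.iterate_zero, id_eq, pow_zero]
      nlinarith [hτ.2, h]
    | succ n ih =>
      obtain ⟨hp, hle, hq⟩ := ih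
      obtain ⟨hp', hle', _, hkey⟩ := phi_facts hp hle
      rw [← hbs n] at hp' hle' hkey
      refine ⟨hp', hle', ?_⟩
      rw [hbs n] at hp' hle' hkey ⊢
      set B := b n with hB
      set B' := PhiMinus B with hB'
      have hpn : (0:ℝ) < 5 ^ n := by positivity
      have hpos1 : (0:ℝ) < 10 - B := by linarith
      have hc : (0:ℝ) < 5 ^ (n+1) * (8 - τ) + τ := by
        have : (0:ℝ) < 8 - τ := by linarith [hτ.2]
        positivity
      have h1 : B' * (10 - B) * ((5:ℝ) ^ (n+1) * (8 - τ) + τ) ≤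
          2 * B * ((5:ℝ) ^ (n+1) * (8 - τ) + τ) :=
        mul_le_mul_of_nonneg_right hkey hc.le
      have h2' : 2 * B * ((5:ℝ) ^ (n+1) * (8 - τ) + τ) ≤ 8 * τ * (10 - B) := by
        have hpow : (5:ℝ) ^ (n+1) = 5 * 5 ^ n := by ring
        rw [hpow]
        nlinarith [hq]
      have h3 : B' * ((5:ℝ) ^ (n+1) * (8 - τ) + τ) * (10 - B) ≤ 8 * τ * (10 - B) := by
        nlinarith [h1, h2']
      have h4 : B' * ((5:ℝ) ^ (n+1) * (8 - τ) + τ) ≤ 8 * τ :=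
        le_of_mul_le_mul_right (by linarith [h3]) hpos1
      nlinarith [h4]
  have hmono : Monotone (fun m : ℕ => (5:ℝ)^m * b m) := by
    apply monotone_nat_of_le_succ
    intro n
    obtain ⟨hp, hle, _⟩ := hinv n
    obtain ⟨_, _, hge, _⟩ := phi_facts hp hle
    have hpn : (0:ℝ) < 5 ^ n := by positivity
    rw [hbs n]
    calc (5:ℝ)^n * b n = 5^(n+1) * (b n / 5) := by ring
    _ ≤ 5^(n+1) * PhiMinus (b n) := by
        apply mul_le_mul_of_nonneg_left hge (by positivity)
  have hbdd : BddAbove (Set.range fun m : ℕ => (5:ℝ)^m * b m) := by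
    refine ⟨40/11, ?_⟩
    rintro x ⟨m, rfl⟩
    obtain ⟨hp, hle, hq⟩ := hinv m
    have hpn : (0:ℝ) < 5 ^ m := by positivity
    nlinarith [hτ.2, h, mul_pos h hp]
  exact ⟨_, tendsto_atTop_ciSup hmono hbdd⟩
end

section
/- Let E_m(f) = Σ_{x∼_m y} (f(x) − f(y))² denote the level-m graph energy on the Sierpinski gasket approximations and suppose (5/3)^m E_m(f) is non-decreasing in m (standard fact). If a : V_* → ℂ is bounded with Σ over edges (5/3)^m Σ_{x∼_m y} |a_m(e_{xy})|² ≤ M < ∞ for all m, then: (5/3)^m E^{a_m}_m(f) is bounded as m → ∞ if and only if (5/3)^m E_m(f) is bounded, where E^{a_m}_m(f) = Σ_{x∼_m y} |f(x) − f(y)e^{i a_m(e_{xy})}|². -/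
/-!
Since `|e^{it} - 1| ≤ |t|`, the magnetic increment `f x - f y e^{i a}` differs from the plain
increment `f x - f y` by at most `S |a|`. With `(u + v)² ≤ 2u² + 2v²`, each energy is therefore
at most twice the other plus `2 S² ∑ a²`, and the renormalized phase sum is at most `M` at every
level.
-/

open Finset Complex

lemma norm_add_sq_le_two_mul {E : Type*} [SeminormedAddGroup E] (u v : E) :
    ‖u + v‖ ^ 2 ≤ 2 * ‖u‖ ^ 2 + 2 * ‖v‖ ^ 2 := by
  have := pow_le_pow_left₀ (norm_nonneg _) (norm_add_le u v) 2
  linarith [add_sq_le (a := ‖u‖) (b := ‖v‖)]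

lemma norm_mul_exp_I_mul_sub_one_sq_le {y : ℂ} {S : ℝ} (hy : ‖y‖ ≤ S) (t : ℝ) :
    ‖y * (exp (I * t) - 1)‖ ^ 2 ≤ S ^ 2 * t ^ 2 := by
  have h : ‖y * (exp (I * t) - 1)‖ ≤ S * ‖t‖ := by
    rw [norm_mul]
    exact mul_le_mul hy Real.norm_exp_I_mul_ofReal_sub_one_le (norm_nonneg _)
      ((norm_nonneg y).trans hy)
  calc ‖y * (exp (I * t) - 1)‖ ^ 2 ≤ (S * ‖t‖) ^ 2 :=
        pow_le_pow_left₀ (norm_nonneg _) h 2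
    _ = S ^ 2 * t ^ 2 := by rw [mul_pow, Real.norm_eq_abs, sq_abs]

lemma norm_sub_mul_exp_I_mul_sq_le (x : ℂ) {y : ℂ} {S : ℝ} (hy : ‖y‖ ≤ S) (t : ℝ) :
    ‖x - y * exp (I * t)‖ ^ 2 ≤ 2 * ‖x - y‖ ^ 2 + 2 * S ^ 2 * t ^ 2 := by
  have h := norm_add_sq_le_two_mul (x - y) (-(y * (exp (I * t) - 1)))
  rw [norm_neg, show x - y + -(y * (exp (I * t) - 1)) = x - y * exp (I * t) by ring] at h
  linarith [norm_mul_exp_I_mul_sub_one_sq_le hy t]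

lemma norm_sub_sq_le_of_mul_exp_I_mul (x : ℂ) {y : ℂ} {S : ℝ} (hy : ‖y‖ ≤ S) (t : ℝ) :
    ‖x - y‖ ^ 2 ≤ 2 * ‖x - y * exp (I * t)‖ ^ 2 + 2 * S ^ 2 * t ^ 2 := by
  have h := norm_add_sq_le_two_mul (x - y * exp (I * t)) (y * (exp (I * t) - 1))
  rw [show x - y * exp (I * t) + y * (exp (I * t) - 1) = x - y by ring] at h
  linarith [norm_mul_exp_I_mul_sub_one_sq_le hy t]

section GraphEnergy

variable {V ι : Type*} [Fintype ι] (p q : ι → V)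

/-- The energy of `f` on the graph whose edge `e` joins `p e` to `q e`. -/
noncomputable def graphEnergy (f : V → ℂ) : ℝ :=
  ∑ e, ‖f (p e) - f (q e)‖ ^ 2

noncomputable def magneticEnergy (a : ι → ℝ) (f : V → ℂ) : ℝ :=
  ∑ e, ‖f (p e) - f (q e) * exp (I * a e)‖ ^ 2

variable {p q} {f : V → ℂ} {S : ℝ}

lemma magneticEnergy_le (hS : ∀ v, ‖f v‖ ≤ S) (a : ι → ℝ) :
    magneticEnergy p q a f ≤ 2 * graphEnergy p q f + 2 * S ^ 2 * ∑ e, a e ^ 2 := by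
  rw [graphEnergy, magneticEnergy, mul_sum, mul_sum, ← sum_add_distrib]
  exact sum_le_sum fun e _ => norm_sub_mul_exp_I_mul_sq_le _ (hS _) _

lemma graphEnergy_le (hS : ∀ v, ‖f v‖ ≤ S) (a : ι → ℝ) :
    graphEnergy p q f ≤ 2 * magneticEnergy p q a f + 2 * S ^ 2 * ∑ e, a e ^ 2 := by
  rw [graphEnergy, magneticEnergy, mul_sum, mul_sum, ← sum_add_distrib]
  exact sum_le_sum fun e _ => norm_sub_sq_le_of_mul_exp_I_mul _ (hS _) _

end GraphEnergy

lemma exists_forall_mul_le_of_le_two_mul_add {α : Type*} {r x y s : α → ℝ} {c M : ℝ}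
    (hr : ∀ m, 0 ≤ r m) (hc : 0 ≤ c) (hs : ∀ m, r m * s m ≤ M)
    (hxy : ∀ m, x m ≤ 2 * y m + c * s m) (hy : ∃ K, ∀ m, r m * y m ≤ K) :
    ∃ K, ∀ m, r m * x m ≤ K := by
  obtain ⟨K, hK⟩ := hy
  refine ⟨2 * K + c * M, fun m => ?_⟩
  calc r m * x m ≤ r m * (2 * y m + c * s m) := mul_le_mul_of_nonneg_left (hxy m) (hr m)
    _ = 2 * (r m * y m) + c * (r m * s m) := by ring
    _ ≤ 2 * K + c * M := by linarith [hK m, mul_le_mul_of_nonneg_left (hs m) hc]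

/-- Renormalized magnetic graph energies are bounded iff the non-magnetic ones are:
given a family of finite graphs (edge index types `ι m` with endpoint maps `p m, q m`),
a bounded function `f` and magnetic phases `a m` with
`(5/3)^m ∑_e |a m e|² ≤ M` for all `m`, the sequence `(5/3)^m E^{a_m}_m(f)` is bounded
if and only if `(5/3)^m E_m(f)` is bounded. -/
theorem stmt_19 {V : Type*} (ι : ℕ → Type*) [∀ m, Fintype (ι m)]
    (p q : ∀ m, ι m → V) (f : V → ℂ) (S : ℝ) (hS : ∀ v, ‖f v‖ ≤ S)
    (a : ∀ m, ι m → ℝ) (M : ℝ)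
    (hM : ∀ m, (5 / 3 : ℝ) ^ m * ∑ e : ι m, (a m e) ^ 2 ≤ M) :
    (∃ K : ℝ, ∀ m, (5 / 3 : ℝ) ^ m *
        ∑ e : ι m, ‖f (p m e)
          - f (q m e) * Complex.exp (Complex.I * (a m e : ℝ))‖ ^ 2 ≤ K) ↔
      (∃ K : ℝ, ∀ m, (5 / 3 : ℝ) ^ m *
        ∑ e : ι m, ‖f (p m e) - f (q m e)‖ ^ 2 ≤ K) := by
  have hr : ∀ m : ℕ, (0 : ℝ) ≤ (5 / 3 : ℝ) ^ m := fun m => by positivity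
  have hc : (0 : ℝ) ≤ 2 * S ^ 2 := by positivity
  constructor
  · exact exists_forall_mul_le_of_le_two_mul_add (x := fun m => graphEnergy (p m) (q m) f)
      hr hc hM fun m => graphEnergy_le hS (a m)
  · exact exists_forall_mul_le_of_le_two_mul_add
      (x := fun m => magneticEnergy (p m) (q m) (a m) f) hr hc hM
      fun m => magneticEnergy_le hS (a m)
end
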